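/- Abstract complexity bound: suppose a learning procedure on a graph with n ≥ 2 vertices and m edges processes, for each vertex u, a number of event-utilizations equal to sum_{i=1}^{d(u)} i, where d(u) is the degree of u and sum_u d(u) = 2m. Then the total number of event-utilizations T satisfies T ≥ 2m^2/n and T ≤ (1/2)(2m^2/(n-1) + m(n-2)) + m; in particular T = O(m^2/n + mn) and T = Ω(m^2/n). -/

import Mathlib

/-!
Since `∑_{i=1}^{d} i = (d² + d)/2`, the total is `T = (∑ d(u)² + 2m)/2`, so both bounds are
bounds on the sum of squared degrees. The lower one is Cauchy–Schwarz. For de Caen's upper bound,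
view the edge set as a 0/1 vector on vertex pairs and project it onto the span of the stars
`{uv : v ≠ u}`; Bessel's inequality for this projection is the nonnegativity of
`∑_{u ≠ v} ((n-1)(n-2) A_uv - (n-1)(d(u) + d(v)) + 2m)²`, which expands to
`(n-1)(n-2)((n-1)(n-2)·2m - 2(n-1)∑ d(u)² + 4m²)`. For `n = 2` this is vacuous, and there
`∑ d(u)² ≤ 2m ≤ 2m²` instead.
-/

open Finset

namespace SimpleGraph

variable {V R : Type*} [Fintype V] (G : SimpleGraph V) [DecidableRel G.Adj] [CommRing R]

theorem sum_adjMatrix_apply (u : V) : ∑ v, G.adjMatrix R u v = G.degree u := by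
  simpa [dotProduct] using G.adjMatrix_dotProduct u (fun _ => (1 : R))

theorem sum_sum_adjMatrix_apply_mul (f : V → R) :
    ∑ u, ∑ v, G.adjMatrix R u v * f v = ∑ v, G.degree v * f v := by
  rw [Finset.sum_comm]
  refine Finset.sum_congr rfl fun v _ => ?_
  rw [← Finset.sum_mul, ← sum_adjMatrix_apply]
  simp only [adjMatrix_apply, adj_comm]

theorem sum_sum_sq_adjMatrix_add_degree (a b c : R) :
    ∑ u, ∑ v, (a * G.adjMatrix R u v + b * (G.degree u + G.degree v) + c) ^ 2 =
      (a ^ 2 + 2 * a * c + 4 * b * c * Fintype.card V) * ∑ u, (G.degree u : R)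
      + (4 * a * b + 2 * b ^ 2 * Fintype.card V) * ∑ u, (G.degree u : R) ^ 2
      + 2 * b ^ 2 * (∑ u, (G.degree u : R)) ^ 2 + Fintype.card V ^ 2 * c ^ 2 := by
  have hA : ∀ u v, G.adjMatrix R u v ^ 2 = G.adjMatrix R u v := fun u v => by
    by_cases h : G.Adj u v <;> simp [h]
  have expand : ∀ u v, (a * G.adjMatrix R u v + b * (G.degree u + G.degree v) + c) ^ 2 =
      (a ^ 2 + 2 * a * c) * G.adjMatrix R u v + 2 * a * b * (G.adjMatrix R u v * G.degree u)
      + 2 * a * b * (G.adjMatrix R u v * G.degree v)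
      + b ^ 2 * ((G.degree u : R) ^ 2 + (G.degree v : R) ^ 2)
      + 2 * b ^ 2 * ((G.degree u : R) * G.degree v)
      + 2 * b * c * (G.degree u + G.degree v) + c ^ 2 := fun u v => by
    linear_combination a ^ 2 * hA u v
  simp only [expand, Finset.sum_add_distrib, ← Finset.mul_sum, sum_sum_adjMatrix_apply_mul,
    sum_adjMatrix_apply, ← Finset.sum_mul, Finset.sum_const, Finset.card_univ, nsmul_eq_mul,
    ← sq]
  ring

theorem two_mul_card_sub_one_mul_sum_degree_sq_le (hn : 3 ≤ Fintype.card V) :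
    2 * ((Fintype.card V : ℝ) - 1) * ∑ u, (G.degree u : ℝ) ^ 2 ≤
      (∑ u, (G.degree u : ℝ)) ^ 2
      + ((Fintype.card V : ℝ) - 1) * ((Fintype.card V : ℝ) - 2)
        * ∑ u, (G.degree u : ℝ) := by
  have hn3 : (3 : ℝ) ≤ Fintype.card V := by exact_mod_cast hn
  set n : ℝ := (Fintype.card V : ℝ)
  set Q := ∑ u, (G.degree u : ℝ) ^ 2
  set D := ∑ u, (G.degree u : ℝ)
  let f u v := (n - 1) * (n - 2) * G.adjMatrix ℝ u v + -(n - 1) * (G.degree u + G.degree v) + D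
  have diagonal_le : ∑ u, f u u ^ 2 ≤ ∑ u, ∑ v, f u v ^ 2 :=
    sum_le_sum fun u _ => single_le_sum (fun v _ => sq_nonneg (f u v)) (mem_univ u)
  have diagonal_eq : ∑ u, f u u ^ 2 = 4 * (n - 1) ^ 2 * Q - 4 * (n - 1) * D ^ 2 + n * D ^ 2 := by
    have f_diag u : f u u = -2 * (n - 1) * G.degree u + D := by simp [f]; ring
    simp only [f_diag, add_sq, mul_pow, Finset.sum_add_distrib, ← Finset.mul_sum,
      ← Finset.sum_mul, Finset.sum_const, Finset.card_univ, nsmul_eq_mul]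
    ring
  rw [diagonal_eq, sum_sum_sq_adjMatrix_add_degree] at diagonal_le
  have hprod : 0 ≤ (n - 1) * (n - 2) * (D ^ 2 + (n - 1) * (n - 2) * D - 2 * (n - 1) * Q) := by
    linear_combination diagonal_le
  have hfactor : 0 < (n - 1) * (n - 2) := mul_pos (by linarith) (by linarith)
  linarith [(mul_nonneg_iff_of_pos_left hfactor).1 hprod]

theorem sum_degree_sq_le_card_sub_one_mul_sum_degree :
    ∑ u, (G.degree u : ℝ) ^ 2 ≤ ((Fintype.card V : ℝ) - 1) * ∑ u, (G.degree u : ℝ) := by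
  rw [Finset.mul_sum]
  refine sum_le_sum fun u _ => ?_
  have hdeg : (G.degree u : ℝ) ≤ (Fintype.card V : ℝ) - 1 := by
    have := G.degree_lt_card_verts u
    rw [le_sub_iff_add_le]
    exact_mod_cast this
  rw [sq]
  exact mul_le_mul_of_nonneg_right hdeg (Nat.cast_nonneg _)

theorem sum_degree_sq_le_card_edgeFinset_mul (hn : 2 ≤ Fintype.card V) :
    ∑ u, (G.degree u : ℝ) ^ 2 ≤ #G.edgeFinset
      * (2 * #G.edgeFinset / ((Fintype.card V : ℝ) - 1) + Fintype.card V - 2) := by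
  have handshake : ∑ u, (G.degree u : ℝ) = 2 * #G.edgeFinset := by
    exact_mod_cast G.sum_degrees_eq_twice_card_edges
  rcases hn.eq_or_lt with hn2 | hn3
  · have hsq : (#G.edgeFinset : ℝ) ≤ #G.edgeFinset ^ 2 := by
      exact_mod_cast Nat.le_self_pow two_ne_zero _
    have := G.sum_degree_sq_le_card_sub_one_mul_sum_degree
    rw [handshake, ← hn2] at this
    rw [← hn2]
    norm_num at this ⊢
    linarith
  · have hn1 : (0 : ℝ) < (Fintype.card V : ℝ) - 1 := by
      rw [sub_pos]; exact_mod_cast (by omega : 1 < Fintype.card V)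
    have := G.two_mul_card_sub_one_mul_sum_degree_sq_le hn3
    rw [handshake] at this
    have hrhs : (#G.edgeFinset : ℝ)
        * (2 * #G.edgeFinset / ((Fintype.card V : ℝ) - 1) + Fintype.card V - 2)
        = ((2 * #G.edgeFinset) ^ 2 + ((Fintype.card V : ℝ) - 1) * ((Fintype.card V : ℝ) - 2)
          * (2 * #G.edgeFinset)) / (2 * ((Fintype.card V : ℝ) - 1)) := by
      field_simp
      ring
    rw [hrhs, le_div_iff₀ (mul_pos two_pos hn1)]
    linarith

end SimpleGraph

theorem Finset.sum_Icc_one_natCast {K : Type*} [Field K] [CharZero K] (k : ℕ) :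
    ∑ i ∈ Icc 1 k, (i : K) = k * (k + 1) / 2 := by
  induction k with
  | zero => simp
  | succ k ih =>
    rw [sum_Icc_succ_top (by omega), ih]
    push_cast
    ring

theorem one_hop_subgraph_complexity_general {V : Type*} [Fintype V]
    (G : SimpleGraph V) [DecidableRel G.Adj]
    (n m : ℕ) (hn : n = Fintype.card V) (hm : m = G.edgeFinset.card) (hn2 : 2 ≤ n)
    (T : ℝ) (hT : T = ∑ u : V, ∑ i ∈ Finset.Icc 1 (G.degree u), (i : ℝ)) :
    2 * (m : ℝ) ^ 2 / (n : ℝ) ≤ T ∧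
    T ≤ (1 / 2) * (2 * (m : ℝ) ^ 2 / ((n : ℝ) - 1) + (m : ℝ) * ((n : ℝ) - 2))
        + (m : ℝ) := by
  have handshake : ∑ u, (G.degree u : ℝ) = 2 * m := by
    rw [hm]; exact_mod_cast G.sum_degrees_eq_twice_card_edges
  have hT_eq : T = (∑ u, (G.degree u : ℝ) ^ 2) / 2 + m := by
    have hgauss u :
        ∑ i ∈ Icc 1 (G.degree u), (i : ℝ) = ((G.degree u : ℝ) ^ 2 + G.degree u) / 2 := by
      rw [sum_Icc_one_natCast]; ring
    rw [hT, sum_congr rfl fun u _ => hgauss u, ← sum_div, sum_add_distrib, handshake]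
    ring
  have cauchy_schwarz : (2 * m : ℝ) ^ 2 ≤ n * ∑ u, (G.degree u : ℝ) ^ 2 := by
    rw [← handshake, hn]
    exact sq_sum_le_card_mul_sum_sq
  have de_caen := G.sum_degree_sq_le_card_edgeFinset_mul (hn ▸ hn2)
  rw [← hn, ← hm] at de_caen
  have hn_pos : (0 : ℝ) < n := by positivity
  constructor
  · rw [div_le_iff₀ hn_pos, hT_eq]
    linarith [mul_nonneg (Nat.cast_nonneg m) hn_pos.le]
  · have hrhs : (m : ℝ) * (2 * m / ((n : ℝ) - 1) + n - 2)
        = 2 * (m : ℝ) ^ 2 / ((n : ℝ) - 1) + m * ((n : ℝ) - 2) := by ring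
    rw [hT_eq]
    linarith

/-- Complexity of 1-hop-subgraph-based learning: the total number of event
utilizations `T = ∑_u ∑_{i=1}^{d(u)} i` satisfies `2m²/n ≤ T` and
`T ≤ (1/2)(2m²/(n-1) + m(n-2)) + m`. -/
theorem one_hop_subgraph_complexity {V : Type*} [Fintype V] [DecidableEq V]
    (G : SimpleGraph V) [DecidableRel G.Adj]
    (n m : ℕ) (hn : n = Fintype.card V) (hm : m = G.edgeFinset.card) (hn2 : 2 ≤ n)
    (T : ℝ) (hT : T = ∑ u : V, ∑ i ∈ Finset.Icc 1 (G.degree u), (i : ℝ)) :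
    2 * (m : ℝ) ^ 2 / (n : ℝ) ≤ T ∧
    T ≤ (1 / 2) * (2 * (m : ℝ) ^ 2 / ((n : ℝ) - 1) + (m : ℝ) * ((n : ℝ) - 2))
        + (m : ℝ) :=
  one_hop_subgraph_complexity_general G n m hn hm hn2 T hT
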